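/- arXiv:1806.00528 — 4 statements merged into one kernel-verified Lean document; each statement's English description precedes it below -/
import Mathlib

section
/- For a Markov chain M with discount λ ∈ (0,1], the least fixed point of Ψ_λ is indeed a 1-bounded pseudometric: it is symmetric, vanishes on the diagonal, and satisfies the triangle inequality. -/
/-!
Let `e` be the largest pseudometric below `d` (a pointwise supremum of pseudometrics is one).
The Kantorovich lifting of a pseudometric is again a pseudometric, the triangle inequality coming
from gluing two couplings along their common marginal, so `Ψ e` is a
pseudometric; by monotonicity `Ψ e ≤ Ψ d = d`, hence `Ψ e ≤ e`. A bounded prefixed point of a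
monotone map lies above its least bounded fixed point (Knaster–Tarski), so `d ≤ e ≤ d`.
-/

open Finset

def IsDist {X : Type*} [Fintype X] (μ : X → ℝ) : Prop :=
  (∀ x, 0 ≤ μ x) ∧ ∑ x, μ x = 1

def IsCoupling {X : Type*} [Fintype X] (μ ν : X → ℝ) (ω : X × X → ℝ) : Prop :=
  IsDist ω ∧ (∀ x, ∑ y, ω (x, y) = μ x) ∧ (∀ y, ∑ x, ω (x, y) = ν y)

noncomputable def kant {X : Type*} [Fintype X] (d : X → X → ℝ) (μ ν : X → ℝ) : ℝ :=
  sInf { c | ∃ ω : X × X → ℝ, IsCoupling μ ν ω ∧ c = ∑ p : X × X, d p.1 p.2 * ω p }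

open Classical in
noncomputable def psi {S L : Type*} [Fintype S] (lam : ℝ) (T : S → S → ℝ) (lab : S → L)
    (d : S → S → ℝ) : S → S → ℝ :=
  fun s t => if lab s = lab t then lam * kant d (T s) (T t) else 1

noncomputable def bdist {S L : Type*} [Fintype S] (lam : ℝ) (T : S → S → ℝ) (lab : S → L) :
    S → S → ℝ := fun s t =>
  sInf { r | ∃ d : S → S → ℝ, (∀ a b, 0 ≤ d a b ∧ d a b ≤ 1) ∧
      (∀ a b, psi lam T lab d a b ≤ d a b) ∧ r = d s t }

def sumT {M N : Type*} (τ : M → M → ℝ) (θ : N → N → ℝ) : M ⊕ N → M ⊕ N → ℝ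
  | Sum.inl m, Sum.inl m' => τ m m'
  | Sum.inr n, Sum.inr n' => θ n n'
  | _, _ => 0

def sumL {M N L : Type*} (ℓ : M → L) (α : N → L) : M ⊕ N → L
  | Sum.inl m => ℓ m
  | Sum.inr n => α n

section Kantorovich

variable {X : Type*} [Fintype X] {μ ν ρ : X → ℝ} {ω ω₁ ω₂ : X × X → ℝ}

def transportCost (e : X → X → ℝ) (ω : X × X → ℝ) : ℝ :=
  ∑ p : X × X, e p.1 p.2 * ω p

lemma transportCost_nonneg {e : X → X → ℝ} (he : 0 ≤ e) (hω : IsDist ω) :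
    0 ≤ transportCost e ω :=
  Finset.sum_nonneg fun p _ => mul_nonneg (he _ _) (hω.1 p)

lemma transportCost_mono {e e' : X → X → ℝ} (hee : e ≤ e') (hω : IsDist ω) :
    transportCost e ω ≤ transportCost e' ω :=
  Finset.sum_le_sum fun p _ => mul_le_mul_of_nonneg_right (hee _ _) (hω.1 p)

lemma IsCoupling.prod (hμ : IsDist μ) (hν : IsDist ν) :
    IsCoupling μ ν (fun p => μ p.1 * ν p.2) := by
  refine ⟨⟨fun p => mul_nonneg (hμ.1 _) (hν.1 _), ?_⟩, fun x => ?_, fun y => ?_⟩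
  · simp only [Fintype.sum_prod_type, ← Finset.mul_sum, hν.2, mul_one, hμ.2]
  · simp only [← Finset.mul_sum, hν.2, mul_one]
  · simp only [← Finset.sum_mul, hμ.2, one_mul]

lemma IsCoupling.diag [DecidableEq X] (hμ : IsDist μ) :
    IsCoupling μ μ (fun p => if p.1 = p.2 then μ p.1 else 0) := by
  refine ⟨⟨fun _ => ?_, ?_⟩, fun x => ?_, fun y => ?_⟩
  · dsimp only
    split_ifs
    exacts [hμ.1 _, le_rfl]
  · simp [Fintype.sum_prod_type, hμ.2]
  · simp
  · simp

lemma IsCoupling.swap (hω : IsCoupling μ ν ω) :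
    IsCoupling ν μ (fun p => ω p.swap) :=
  ⟨⟨fun _ => hω.1.1 _, (Equiv.sum_comp (Equiv.prodComm X X) ω).trans hω.1.2⟩, hω.2.2, hω.2.1⟩

lemma IsCoupling.nonneg_right (hω : IsCoupling μ ν ω) (y : X) :
    0 ≤ ν y :=
  hω.2.2 y ▸ Finset.sum_nonneg fun _ _ => hω.1.1 _

lemma IsCoupling.apply_eq_zero_of_left (hω : IsCoupling μ ν ω)
    {x : X} (hx : μ x = 0) (y : X) : ω (x, y) = 0 :=
  (Finset.sum_eq_zero_iff_of_nonneg fun _ _ => hω.1.1 _).1 ((hω.2.1 x).trans hx) y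
    (Finset.mem_univ y)

lemma IsCoupling.apply_eq_zero_of_right (hω : IsCoupling μ ν ω)
    {y : X} (hy : ν y = 0) (x : X) : ω (x, y) = 0 :=
  hω.swap.apply_eq_zero_of_left hy x

lemma transportCost_swap (e : X → X → ℝ) (ω : X × X → ℝ) :
    transportCost (fun a b => e b a) (fun p => ω p.swap) = transportCost e ω :=
  Equiv.sum_comp (Equiv.prodComm X X) fun p => e p.1 p.2 * ω p

lemma kant_le_transportCost {e : X → X → ℝ} (he : 0 ≤ e)
    (hω : IsCoupling μ ν ω) : kant e μ ν ≤ transportCost e ω := by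
  refine csInf_le ⟨0, ?_⟩ ⟨ω, hω, rfl⟩
  rintro c ⟨ω', hω', rfl⟩
  exact transportCost_nonneg he hω'.1

lemma le_kant {e : X → X → ℝ} (hμ : IsDist μ) (hν : IsDist ν) {c : ℝ}
    (h : ∀ ω, IsCoupling μ ν ω → c ≤ transportCost e ω) : c ≤ kant e μ ν := by
  refine le_csInf ⟨_, _, IsCoupling.prod hμ hν, rfl⟩ ?_
  rintro c ⟨ω, hω, rfl⟩
  exact h ω hω

lemma kant_nonneg {e : X → X → ℝ} (he : 0 ≤ e) (hμ : IsDist μ) (hν : IsDist ν) :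
    0 ≤ kant e μ ν :=
  le_kant hμ hν fun _ hω => transportCost_nonneg he hω.1

lemma kant_le_one {e : X → X → ℝ} (he : 0 ≤ e) (he1 : e ≤ 1)
    (hμ : IsDist μ) (hν : IsDist ν) : kant e μ ν ≤ 1 := by
  have hprod := IsCoupling.prod hμ hν
  calc kant e μ ν ≤ transportCost e _ := kant_le_transportCost he hprod
    _ ≤ transportCost 1 _ := transportCost_mono he1 hprod.1
    _ = 1 := by simpa [transportCost] using hprod.1.2

lemma kant_mono {e e' : X → X → ℝ} (he : 0 ≤ e) (hee : e ≤ e')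
    (hμ : IsDist μ) (hν : IsDist ν) : kant e μ ν ≤ kant e' μ ν :=
  le_kant hμ hν fun _ hω => (kant_le_transportCost he hω).trans (transportCost_mono hee hω.1)

lemma kant_self {e : X → X → ℝ} (he : 0 ≤ e) (he0 : ∀ x, e x x = 0)
    (hμ : IsDist μ) : kant e μ μ = 0 := by
  classical
  refine le_antisymm ((kant_le_transportCost he (IsCoupling.diag hμ)).trans_eq ?_)
    (kant_nonneg he hμ hμ)
  refine Finset.sum_eq_zero fun p _ => ?_
  dsimp only
  split_ifs with h
  · rw [h, he0, zero_mul]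
  · exact mul_zero _

lemma kant_swap (e : X → X → ℝ) (μ ν : X → ℝ) :
    kant (fun a b => e b a) μ ν = kant e ν μ := by
  suffices h : ∀ (e : X → X → ℝ) μ ν c, (∃ ω, IsCoupling μ ν ω ∧ c = transportCost e ω) →
      ∃ ω, IsCoupling ν μ ω ∧ c = transportCost (fun a b => e b a) ω by
    exact congrArg sInf (Set.ext fun c => ⟨h (fun a b => e b a) μ ν c, h e ν μ c⟩)
  rintro e μ ν c ⟨ω, hω, rfl⟩
  exact ⟨_, hω.swap, by rw [← transportCost_swap e ω]⟩

noncomputable def glue (ν : X → ℝ) (ω₁ ω₂ : X × X → ℝ) : X × X → ℝ :=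
  fun p => ∑ y, ω₁ (p.1, y) * ω₂ (y, p.2) / ν y

-- Where `ν y = 0` both couplings vanish on the fibre over `y`, matching the junk value `_ / 0 = 0`.
lemma sum_glue_right (h₁ : IsCoupling μ ν ω₁) (h₂ : IsCoupling ν ρ ω₂) (x y : X) :
    ∑ z, ω₁ (x, y) * ω₂ (y, z) / ν y = ω₁ (x, y) := by
  by_cases hy : ν y = 0
  · simp [hy, h₁.apply_eq_zero_of_right hy]
  · rw [← Finset.sum_div, ← Finset.mul_sum, h₂.2.1 y, mul_div_cancel_right₀ _ hy]

lemma sum_glue_left (h₁ : IsCoupling μ ν ω₁) (h₂ : IsCoupling ν ρ ω₂) (y z : X) :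
    ∑ x, ω₁ (x, y) * ω₂ (y, z) / ν y = ω₂ (y, z) := by
  by_cases hy : ν y = 0
  · simp [hy, h₂.apply_eq_zero_of_left hy]
  · rw [← Finset.sum_div, ← Finset.sum_mul, h₁.2.2 y, mul_div_cancel_left₀ _ hy]

lemma isCoupling_glue (h₁ : IsCoupling μ ν ω₁) (h₂ : IsCoupling ν ρ ω₂) :
    IsCoupling μ ρ (glue ν ω₁ ω₂) := by
  have hμ : ∀ x, ∑ z, glue ν ω₁ ω₂ (x, z) = μ x := fun x => by
    simp only [glue]
    rw [Finset.sum_comm]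
    simp only [sum_glue_right h₁ h₂, h₁.2.1]
  refine ⟨⟨fun p => Finset.sum_nonneg fun y _ => ?_, ?_⟩, hμ, fun z => ?_⟩
  · exact div_nonneg (mul_nonneg (h₁.1.1 _) (h₂.1.1 _)) (h₁.nonneg_right y)
  · rw [Fintype.sum_prod_type]
    simp only [hμ, ← h₁.2.1]
    rw [← Fintype.sum_prod_type, h₁.1.2]
  · simp only [glue]
    rw [Finset.sum_comm]
    simp only [sum_glue_left h₁ h₂, h₂.2.2]

lemma transportCost_glue_le {e : X → X → ℝ} (htri : ∀ x y z, e x z ≤ e x y + e y z)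
    (h₁ : IsCoupling μ ν ω₁) (h₂ : IsCoupling ν ρ ω₂) :
    transportCost e (glue ν ω₁ ω₂) ≤ transportCost e ω₁ + transportCost e ω₂ := by
  have key : ∀ x y z, e x z * (ω₁ (x, y) * ω₂ (y, z) / ν y) ≤
      e x y * (ω₁ (x, y) * ω₂ (y, z) / ν y) + e y z * (ω₁ (x, y) * ω₂ (y, z) / ν y) :=
    fun x y z => by
      rw [← add_mul]
      exact mul_le_mul_of_nonneg_right (htri x y z)
        (div_nonneg (mul_nonneg (h₁.1.1 _) (h₂.1.1 _)) (h₁.nonneg_right y))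
  calc transportCost e (glue ν ω₁ ω₂)
      = ∑ x, ∑ y, ∑ z, e x z * (ω₁ (x, y) * ω₂ (y, z) / ν y) := by
        simp only [transportCost, glue, Fintype.sum_prod_type, Finset.mul_sum]
        exact Finset.sum_congr rfl fun x _ => Finset.sum_comm
    _ ≤ ∑ x, ∑ y, ∑ z, (e x y * (ω₁ (x, y) * ω₂ (y, z) / ν y) +
          e y z * (ω₁ (x, y) * ω₂ (y, z) / ν y)) := by gcongr with x _ y _ z _; exact key x y z
    _ = transportCost e ω₁ + transportCost e ω₂ := by
        have h₂_sum : ∑ x, ∑ y, ∑ z, e y z * (ω₁ (x, y) * ω₂ (y, z) / ν y) =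
            ∑ y, ∑ z, e y z * ω₂ (y, z) := by
          rw [Finset.sum_comm]
          refine Finset.sum_congr rfl fun y _ => ?_
          rw [Finset.sum_comm]
          simp only [← Finset.mul_sum, sum_glue_left h₁ h₂]
        simp only [Finset.sum_add_distrib, ← Finset.mul_sum, sum_glue_right h₁ h₂, h₂_sum]
        simp only [transportCost, Fintype.sum_prod_type]

lemma kant_triangle {e : X → X → ℝ} (he : 0 ≤ e) (htri : ∀ x y z, e x z ≤ e x y + e y z)
    (hμ : IsDist μ) (hν : IsDist ν) (hρ : IsDist ρ) :
    kant e μ ρ ≤ kant e μ ν + kant e ν ρ := by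
  suffices h : kant e μ ρ - kant e ν ρ ≤ kant e μ ν by linarith
  refine le_kant hμ hν fun ω₁ h₁ => ?_
  suffices h : kant e μ ρ - transportCost e ω₁ ≤ kant e ν ρ by linarith
  refine le_kant hν hρ fun ω₂ h₂ => ?_
  linarith [kant_le_transportCost he (isCoupling_glue h₁ h₂), transportCost_glue_le htri h₁ h₂]

end Kantorovich

section Psi

variable {M L : Type*} [Fintype M] {lam : ℝ} {τ : M → M → ℝ} {ℓ : M → L}

lemma psi_nonneg (hlam : 0 ≤ lam) (hτ : ∀ m, IsDist (τ m)) {e : M → M → ℝ} (he : 0 ≤ e) :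
    0 ≤ psi lam τ ℓ e := fun m n => by
  unfold psi
  split_ifs
  exacts [mul_nonneg hlam (kant_nonneg he (hτ m) (hτ n)), zero_le_one]

lemma psi_le_one (hlam1 : lam ≤ 1) (hτ : ∀ m, IsDist (τ m)) {e : M → M → ℝ}
    (he : 0 ≤ e) (he1 : e ≤ 1) : psi lam τ ℓ e ≤ 1 := fun m n => by
  unfold psi
  split_ifs
  exacts [mul_le_one₀ hlam1 (kant_nonneg he (hτ m) (hτ n)) (kant_le_one he he1 (hτ m) (hτ n)),
    le_rfl]

lemma psi_monotoneOn (hlam : 0 ≤ lam) (hτ : ∀ m, IsDist (τ m)) :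
    MonotoneOn (psi lam τ ℓ) (Set.Ici 0) := fun e he _ _ hee m n => by
  unfold psi
  split_ifs
  exacts [mul_le_mul_of_nonneg_left (kant_mono he hee (hτ m) (hτ n)) hlam, le_rfl]

lemma psi_triangle (hlam : 0 ≤ lam) (hlam1 : lam ≤ 1) (hτ : ∀ m, IsDist (τ m))
    {e : M → M → ℝ} (he : 0 ≤ e) (he1 : e ≤ 1) (htri : ∀ m n p, e m p ≤ e m n + e n p)
    (m n p : M) : psi lam τ ℓ e m p ≤ psi lam τ ℓ e m n + psi lam τ ℓ e n p := by
  have h0 : ∀ a b, 0 ≤ psi lam τ ℓ e a b := psi_nonneg hlam hτ he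
  have h1 : ∀ a b, psi lam τ ℓ e a b ≤ 1 := psi_le_one hlam1 hτ he he1
  by_cases hmn : ℓ m = ℓ n
  · by_cases hnp : ℓ n = ℓ p
    · simp only [psi, hmn, hnp, if_true, ← mul_add]
      exact mul_le_mul_of_nonneg_left (kant_triangle he htri (hτ m) (hτ n) (hτ p)) hlam
    · have : psi lam τ ℓ e n p = 1 := if_neg hnp
      linarith [h0 m n, h1 m p]
  · have : psi lam τ ℓ e m n = 1 := if_neg hmn
    linarith [h0 n p, h1 m p]

end Psi

def IsPseudometric {M : Type*} (d : M → M → ℝ) : Prop :=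
  (∀ m, d m m = 0) ∧ (∀ m n, d m n = d n m) ∧ (∀ m n p, d m p ≤ d m n + d n p)

lemma IsPseudometric.psi {M L : Type*} [Fintype M] {lam : ℝ} (hlam : 0 ≤ lam) (hlam1 : lam ≤ 1)
    {τ : M → M → ℝ} (hτ : ∀ m, IsDist (τ m)) (ℓ : M → L) {e : M → M → ℝ} (he : IsPseudometric e)
    (he0 : 0 ≤ e) (he1 : e ≤ 1) : IsPseudometric (psi lam τ ℓ e) := by
  refine ⟨fun m => ?_, fun m n => ?_, psi_triangle hlam hlam1 hτ he0 he1 he.2.2⟩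
  · simp [_root_.psi, kant_self he0 he.1 (hτ m)]
  · have hsymm : (fun a b => e b a) = e := funext₂ fun a b => he.2.1 b a
    simp only [_root_.psi, ← kant_swap e (τ n) (τ m), hsymm]
    by_cases h : ℓ m = ℓ n
    · simp only [h, if_true]
    · simp only [h, Ne.symm h, if_false]

lemma IsPseudometric.csSup {M : Type*} {S : Set (M → M → ℝ)} (hne : S.Nonempty)
    (hbdd : BddAbove S) (hS : ∀ f ∈ S, IsPseudometric f) : IsPseudometric (sSup S) := by
  have hle : ∀ {f} m n, f ∈ S → f m n ≤ sSup S m n := fun m n hf => le_csSup hbdd hf m n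
  have hsup_le : ∀ m n c, (∀ f ∈ S, f m n ≤ c) → sSup S m n ≤ c := fun m n c h => by
    have := hne.to_subtype
    rw [sSup_apply, iSup_apply]
    exact ciSup_le fun f => h f f.2
  obtain ⟨f₀, hf₀⟩ := hne
  refine ⟨fun m => ?_, fun m n => ?_, fun m n p => ?_⟩
  · exact le_antisymm (hsup_le m m 0 fun f hf => ((hS f hf).1 m).le)
      ((hS f₀ hf₀).1 m ▸ hle m m hf₀)
  · exact le_antisymm (hsup_le m n _ fun f hf => (hS f hf).2.1 m n ▸ hle n m hf)
      (hsup_le n m _ fun f hf => (hS f hf).2.1 n m ▸ hle m n hf)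
  · exact hsup_le m p _ fun f hf =>
      ((hS f hf).2.2 m n p).trans (add_le_add (hle m n hf) (hle n p hf))

/-- Knaster–Tarski on an interval of a conditionally complete lattice: the infimum of the
prefixed points below `y` is a fixed point. -/
theorem le_of_map_le_of_le_fixedPoints {β : Type*} [ConditionallyCompleteLattice β]
    {F : β → β} {a b x y : β} (hF : MonotoneOn F (Set.Ici a)) (hFa : ∀ z, a ≤ z → a ≤ F z)
    (hx : ∀ z ∈ Set.Icc a b, F z = z → x ≤ z) (hy : y ∈ Set.Icc a b) (hFy : F y ≤ y) : x ≤ y := by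
  set S := {z | z ∈ Set.Icc a y ∧ F z ≤ z}
  have hyS : y ∈ S := ⟨⟨hy.1, le_rfl⟩, hFy⟩
  have hbdd : BddBelow S := ⟨a, fun z hz => hz.1.1⟩
  set g := sInf S
  have hag : a ≤ g := le_csInf ⟨y, hyS⟩ fun z hz => hz.1.1
  have hgy : g ≤ y := csInf_le hbdd hyS
  have hFg : F g ≤ g := le_csInf ⟨y, hyS⟩ fun z hz =>
    (hF hag hz.1.1 (csInf_le hbdd hz)).trans hz.2
  have hFgS : F g ∈ S :=
    ⟨⟨hFa g hag, (hF hag hy.1 hgy).trans hFy⟩, hF (hFa g hag) hag hFg⟩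
  have hfix : F g = g := le_antisymm hFg (csInf_le hbdd hFgS)
  exact (hx g ⟨hag, hgy.trans hy.2⟩ hfix).trans hgy

theorem stmt6_general {M L : Type*} [Fintype M]
    (lam : ℝ) (hlam : 0 < lam ∧ lam ≤ 1)
    (τ : M → M → ℝ) (hτ : ∀ m, IsDist (τ m)) (ℓ : M → L)
    (d : M → M → ℝ)
    (hb : ∀ a b, 0 ≤ d a b ∧ d a b ≤ 1)
    (hfix : psi lam τ ℓ d = d)
    (hleast : ∀ d' : M → M → ℝ, (∀ a b, 0 ≤ d' a b ∧ d' a b ≤ 1) →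
        psi lam τ ℓ d' = d' → ∀ a b, d a b ≤ d' a b) :
    (∀ m, d m m = 0) ∧ (∀ m n, d m n = d n m) ∧ (∀ m n p, d m p ≤ d m n + d n p) := by
  have hlam0 : 0 ≤ lam := hlam.1.le
  have hd0 : 0 ≤ d := fun a b => (hb a b).1
  have hd1 : d ≤ 1 := fun a b => (hb a b).2
  -- `e` is the largest pseudometric below `d`
  set S := {f : M → M → ℝ | 0 ≤ f ∧ f ≤ d ∧ IsPseudometric f}
  have h0S : (0 : M → M → ℝ) ∈ S := ⟨le_rfl, hd0, by simp [IsPseudometric]⟩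
  have hbdd : BddAbove S := ⟨d, fun f hf => hf.2.1⟩
  set e := sSup S
  have he0 : 0 ≤ e := le_csSup hbdd h0S
  have hed : e ≤ d := csSup_le ⟨0, h0S⟩ fun f hf => hf.2.1
  have he : IsPseudometric e := IsPseudometric.csSup ⟨0, h0S⟩ hbdd fun f hf => hf.2.2
  have hpsi : psi lam τ ℓ e ∈ S :=
    ⟨psi_nonneg hlam0 hτ he0, hfix ▸ psi_monotoneOn hlam0 hτ he0 hd0 hed,
      he.psi hlam0 hlam.2 hτ ℓ he0 (hed.trans hd1)⟩
  have hde : d ≤ e :=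
    le_of_map_le_of_le_fixedPoints (psi_monotoneOn hlam0 hτ) (fun _ => psi_nonneg hlam0 hτ)
      (fun f hf hf_fix => hleast f (fun a b => ⟨hf.1 a b, hf.2 a b⟩) hf_fix)
      ⟨he0, hed.trans hd1⟩ (le_csSup hbdd hpsi)
  exact le_antisymm hed hde ▸ he

theorem stmt6 {M L : Type*} [Fintype M] [Nonempty M]
    (lam : ℝ) (hlam : 0 < lam ∧ lam ≤ 1)
    (τ : M → M → ℝ) (hτ : ∀ m, IsDist (τ m)) (ℓ : M → L)
    (d : M → M → ℝ)
    (hb : ∀ a b, 0 ≤ d a b ∧ d a b ≤ 1)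
    (hfix : psi lam τ ℓ d = d)
    (hleast : ∀ d' : M → M → ℝ, (∀ a b, 0 ≤ d' a b ∧ d' a b ≤ 1) →
        psi lam τ ℓ d' = d' → ∀ a b, d a b ≤ d' a b) :
    (∀ m, d m m = 0) ∧ (∀ m n, d m n = d n m) ∧ (∀ m n p, d m p ≤ d m n + d n p) :=
  stmt6_general lam hlam τ hτ ℓ d hb hfix hleast
end

section
/- Let C be a coupling structure for a Markov chain M and λ ∈ (0,1]. The discrepancy γ_λ^C, defined as the least fixed point of Γ_λ^C(d)(m,n) = 1 if ℓ(m) ≠ ℓ(n) and λ·∑_{u,v} d(u,v)·C(m,n)(u,v) otherwise, satisfies d_λ ⊑ γ_λ^C, i.e., the bisimilarity distance is bounded above by the discrepancy of any coupling structure. -/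
open Finset

open Classical in
noncomputable def gammaOp {M L : Type*} [Fintype M] (lam : ℝ) (lab : M → L)
    (C : M → M → (M × M → ℝ)) (d : M → M → ℝ) : M → M → ℝ :=
  fun m n => if lab m = lab n then lam * ∑ p : M × M, d p.1 p.2 * C m n p else 1

/-!
The Kantorovich infimum defining `psi d m n` is at most the cost of the particular coupling
`C m n`, so `psi ≤ gammaOp`, and the fixed point `g` of `gammaOp` is a prefixed point of `psi`.
By the Knaster–Tarski argument the least fixed point of the monotone operator `psi` lies below
every prefixed point.
-/

/-- The infimum of the prefixed points of `F` in `[a, b]` is a fixed point of `F`. -/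
theorem le_of_forall_fixedPoint_le {α : Type*} [ConditionallyCompleteLattice α] {F : α → α}
    {a b : α} (hF_mono : ∀ x y, a ≤ x → x ≤ y → F x ≤ F y) (hF_ge : ∀ x, a ≤ x → a ≤ F x)
    {d : α} (hd : ∀ x, a ≤ x → x ≤ b → F x = x → d ≤ x)
    {g : α} (hag : a ≤ g) (hgb : g ≤ b) (hFg : F g ≤ g) : d ≤ g := by
  set S := {x | a ≤ x ∧ x ≤ b ∧ F x ≤ x}
  have hgS : g ∈ S := ⟨hag, hgb, hFg⟩
  have hbdd : BddBelow S := ⟨a, fun x hx => hx.1⟩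
  have hah : a ≤ sInf S := le_csInf ⟨g, hgS⟩ fun x hx => hx.1
  have hhg : sInf S ≤ g := csInf_le hbdd hgS
  have hFh : F (sInf S) ≤ sInf S :=
    le_csInf ⟨g, hgS⟩ fun x hx => (hF_mono _ _ hah (csInf_le hbdd hx)).trans hx.2.2
  have hFhS : F (sInf S) ∈ S :=
    ⟨hF_ge _ hah, hFh.trans (hhg.trans hgb), hF_mono _ _ (hF_ge _ hah) hFh⟩
  exact (hd _ hah (hhg.trans hgb) (le_antisymm hFh (csInf_le hbdd hFhS))).trans hhg

section Kantorovich

variable {X : Type*} [Fintype X]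

theorem kant_le_sum {d : X → X → ℝ} (hd : 0 ≤ d) {μ ν : X → ℝ} {ω : X × X → ℝ}
    (hω : IsCoupling μ ν ω) : kant d μ ν ≤ ∑ p : X × X, d p.1 p.2 * ω p := by
  refine csInf_le ⟨0, ?_⟩ ⟨ω, hω, rfl⟩
  rintro _ ⟨ω', hω', rfl⟩
  exact sum_nonneg fun p _ => mul_nonneg (hd _ _) (hω'.1.1 p)

theorem kant_nonneg_s7 {d : X → X → ℝ} (hd : 0 ≤ d) (μ ν : X → ℝ) : 0 ≤ kant d μ ν := by
  refine Real.sInf_nonneg ?_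
  rintro _ ⟨ω, hω, rfl⟩
  exact sum_nonneg fun p _ => mul_nonneg (hd _ _) (hω.1.1 p)

theorem kant_mono_s7 {d d' : X → X → ℝ} (hd : 0 ≤ d) (hle : d ≤ d') (μ ν : X → ℝ) :
    kant d μ ν ≤ kant d' μ ν := by
  by_cases hcoupling : ∃ ω, IsCoupling μ ν ω
  · obtain ⟨ω, hω⟩ := hcoupling
    refine le_csInf ⟨_, ω, hω, rfl⟩ ?_
    rintro _ ⟨ω', hω', rfl⟩
    exact (kant_le_sum hd hω').trans
      (sum_le_sum fun p _ => mul_le_mul_of_nonneg_right (hle _ _) (hω'.1.1 p))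
  · -- without couplings both infima are `sInf ∅ = 0`
    simp only [not_exists] at hcoupling
    simp [kant, hcoupling]

end Kantorovich

section Operators

variable {M L : Type*} [Fintype M] {lam : ℝ} {τ : M → M → ℝ} {ℓ : M → L}

theorem psi_nonneg_s7 (hlam : 0 ≤ lam) {d : M → M → ℝ} (hd : 0 ≤ d) : 0 ≤ psi lam τ ℓ d := by
  intro m n
  unfold psi
  split_ifs
  · exact mul_nonneg hlam (kant_nonneg_s7 hd _ _)
  · exact zero_le_one

theorem psi_mono (hlam : 0 ≤ lam) {d d' : M → M → ℝ} (hd : 0 ≤ d) (hle : d ≤ d') :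
    psi lam τ ℓ d ≤ psi lam τ ℓ d' := by
  intro m n
  unfold psi
  split_ifs
  · exact mul_le_mul_of_nonneg_left (kant_mono_s7 hd hle _ _) hlam
  · exact le_rfl

theorem psi_le_gammaOp (hlam : 0 ≤ lam) {C : M → M → (M × M → ℝ)}
    (hC : ∀ m n, IsCoupling (τ m) (τ n) (C m n)) {d : M → M → ℝ} (hd : 0 ≤ d) :
    psi lam τ ℓ d ≤ gammaOp lam ℓ C d := by
  intro m n
  unfold psi gammaOp
  split_ifs
  · exact mul_le_mul_of_nonneg_left (kant_le_sum hd (hC m n)) hlam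
  · exact le_rfl

end Operators

theorem stmt7_general {M L : Type*} [Fintype M]
    (lam : ℝ) (hlam : 0 < lam ∧ lam ≤ 1)
    (τ : M → M → ℝ) (ℓ : M → L)
    (C : M → M → (M × M → ℝ)) (hC : ∀ m n, IsCoupling (τ m) (τ n) (C m n))
    (d : M → M → ℝ)
    (hdleast : ∀ d' : M → M → ℝ, (∀ a b, 0 ≤ d' a b ∧ d' a b ≤ 1) →
        psi lam τ ℓ d' = d' → ∀ a b, d a b ≤ d' a b)
    (g : M → M → ℝ)
    (hgb : ∀ a b, 0 ≤ g a b ∧ g a b ≤ 1)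
    (hgfix : gammaOp lam ℓ C g = g) :
    ∀ m n, d m n ≤ g m n := by
  have hlam0 : 0 ≤ lam := hlam.1.le
  have hg0 : 0 ≤ g := fun a b => (hgb a b).1
  have hg1 : g ≤ 1 := fun a b => (hgb a b).2
  have hg_prefixed : psi lam τ ℓ g ≤ g := (psi_le_gammaOp hlam0 hC hg0).trans_eq hgfix
  exact le_of_forall_fixedPoint_le (fun x y hx hxy => psi_mono hlam0 hx hxy)
    (fun x hx => psi_nonneg_s7 hlam0 hx)
    (fun x hx0 hx1 hfix => hdleast x (fun a b => ⟨hx0 a b, hx1 a b⟩) hfix) hg0 hg1 hg_prefixed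

theorem stmt7 {M L : Type*} [Fintype M] [Nonempty M]
    (lam : ℝ) (hlam : 0 < lam ∧ lam ≤ 1)
    (τ : M → M → ℝ) (hτ : ∀ m, IsDist (τ m)) (ℓ : M → L)
    (C : M → M → (M × M → ℝ)) (hC : ∀ m n, IsCoupling (τ m) (τ n) (C m n))
    (d : M → M → ℝ)
    (hdb : ∀ a b, 0 ≤ d a b ∧ d a b ≤ 1)
    (hdfix : psi lam τ ℓ d = d)
    (hdleast : ∀ d' : M → M → ℝ, (∀ a b, 0 ≤ d' a b ∧ d' a b ≤ 1) →
        psi lam τ ℓ d' = d' → ∀ a b, d a b ≤ d' a b)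
    (g : M → M → ℝ)
    (hgb : ∀ a b, 0 ≤ g a b ∧ g a b ≤ 1)
    (hgfix : gammaOp lam ℓ C g = g)
    (hgleast : ∀ g' : M → M → ℝ, (∀ a b, 0 ≤ g' a b ∧ g' a b ≤ 1) →
        gammaOp lam ℓ C g' = g' → ∀ a b, g a b ≤ g' a b) :
    ∀ m n, d m n ≤ g m n :=
  stmt7_general lam hlam τ ℓ C hC d hdleast g hgb hgfix
end

section
/- For states m of a Markov chain M and n of a Markov chain N (considered in the disjoint union), the λ-discounted bisimilarity distance satisfies d_λ(m,n) ≥ λ · τ(m)({u ∈ M : ℓ(u) ∉ L(N)}), where L(N) is the set of labels occurring in N. -/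
open Finset

/-!
A pre-fixed point `d` of the bisimulation operator `psi` is at least `1` between states with
different labels, in particular from every state of `M` whose label does not occur in `N` to
every state of `N`. As `θ n` lives on `N`, every coupling of `τ m` and `θ n` then pays at least
the mass `τ m` gives to those states, so `d m n ≥ λ · K(d)(τ m, θ n)` is at least `λ` times that
mass when `m` and `n` share their label; otherwise `d m n ≥ 1` already. The infimum defining
`bdist` is over a nonempty set because `d ≡ 1` is a pre-fixed point when `λ ≤ 1`.
-/

lemma IsDist.sum_indicator_nonneg {X : Type*} [Fintype X] {μ : X → ℝ} (hμ : IsDist μ)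
    (A : Set X) : 0 ≤ ∑ x, A.indicator μ x :=
  Finset.sum_nonneg fun x _ => Set.indicator_nonneg (fun x _ => hμ.1 x) x

lemma IsDist.sum_indicator_le_one {X : Type*} [Fintype X] {μ : X → ℝ} (hμ : IsDist μ)
    (A : Set X) : ∑ x, A.indicator μ x ≤ 1 :=
  (Finset.sum_le_sum fun x _ => Set.indicator_le_self' (fun x _ => hμ.1 x) x).trans_eq hμ.2

lemma IsDist.isCoupling_prod {X : Type*} [Fintype X] {μ ν : X → ℝ} (hμ : IsDist μ)
    (hν : IsDist ν) : IsCoupling μ ν (fun p => μ p.1 * ν p.2) := by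
  refine ⟨⟨fun p => mul_nonneg (hμ.1 _) (hν.1 _), ?_⟩, fun x => ?_, fun y => ?_⟩
  · simp only [Fintype.sum_prod_type, ← Finset.sum_mul, ← Finset.mul_sum, hμ.2, hν.2, one_mul]
  · simp [← Finset.mul_sum, hν.2]
  · simp [← Finset.sum_mul, hμ.2]

lemma kant_const_one {X : Type*} [Fintype X] {μ ν : X → ℝ} (hμ : IsDist μ) (hν : IsDist ν) :
    kant (fun _ _ => 1) μ ν = 1 := by
  have hcost : { c | ∃ ω : X × X → ℝ, IsCoupling μ ν ω ∧
      c = ∑ p : X × X, (fun _ _ => (1 : ℝ)) p.1 p.2 * ω p } = {1} := by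
    ext c
    simp only [Set.mem_ofPred_eq, Set.mem_singleton_iff, one_mul]
    constructor
    · rintro ⟨ω, hω, rfl⟩
      exact hω.1.2
    · rintro rfl
      exact ⟨_, hμ.isCoupling_prod hν, (hμ.isCoupling_prod hν).1.2.symm⟩
  rw [kant, hcost, csInf_singleton]

lemma IsCoupling.sum_indicator_le_cost {X : Type*} [Fintype X] {d : X → X → ℝ}
    {μ ν : X → ℝ} {ω : X × X → ℝ} {A B : Set X} (hω : IsCoupling μ ν ω)
    (hd : ∀ x y, 0 ≤ d x y) (hAB : ∀ x ∈ A, ∀ y ∈ B, 1 ≤ d x y) (hν : ∀ y ∉ B, ν y = 0) :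
    ∑ x, A.indicator μ x ≤ ∑ p : X × X, d p.1 p.2 * ω p := by
  obtain ⟨⟨hω0, -⟩, hrow, hcol⟩ := hω
  have hvanish : ∀ x, ∀ y ∉ B, ω (x, y) = 0 := fun x y hy =>
    (Finset.sum_eq_zero_iff_of_nonneg fun x _ => hω0 (x, y)).mp ((hcol y).trans (hν y hy)) x
      (Finset.mem_univ x)
  have hA : ∀ x ∈ A, μ x ≤ ∑ y, d x y * ω (x, y) := by
    intro x hx
    rw [← hrow x]
    refine Finset.sum_le_sum fun y _ => ?_
    by_cases hy : y ∈ B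
    · exact le_mul_of_one_le_left (hω0 _) (hAB x hx y hy)
    · simp [hvanish x y hy]
  rw [Fintype.sum_prod_type]
  refine Finset.sum_le_sum fun x _ => ?_
  by_cases hx : x ∈ A
  · simpa [hx] using hA x hx
  · simpa [hx] using Finset.sum_nonneg fun y _ => mul_nonneg (hd x y) (hω0 (x, y))

lemma sum_indicator_le_kant {X : Type*} [Fintype X] {d : X → X → ℝ} {μ ν : X → ℝ}
    {A B : Set X} (hμ : IsDist μ) (hν : IsDist ν) (hd : ∀ x y, 0 ≤ d x y)
    (hAB : ∀ x ∈ A, ∀ y ∈ B, 1 ≤ d x y) (hνB : ∀ y ∉ B, ν y = 0) :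
    ∑ x, A.indicator μ x ≤ kant d μ ν := by
  refine le_csInf ⟨_, _, hμ.isCoupling_prod hν, rfl⟩ ?_
  rintro _ ⟨ω, hω, rfl⟩
  exact hω.sum_indicator_le_cost hd hAB hνB

section Bisimilarity

variable {S L : Type*} [Fintype S] {lam : ℝ} {T : S → S → ℝ} {lab : S → L}

lemma one_le_of_psi_le {d : S → S → ℝ} {a b : S} (h : psi lam T lab d a b ≤ d a b)
    (hab : lab a ≠ lab b) : 1 ≤ d a b := by
  simpa [psi, hab] using h

lemma psi_const_one_le (hlam : lam ≤ 1) (hT : ∀ s, IsDist (T s)) (a b : S) :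
    psi lam T lab (fun _ _ => 1) a b ≤ 1 := by
  unfold psi
  split_ifs
  · rw [kant_const_one (hT a) (hT b), mul_one]
    exact hlam
  · exact le_rfl

lemma le_bdist (hlam : lam ≤ 1) (hT : ∀ s, IsDist (T s)) {r : ℝ} {s t : S}
    (h : ∀ d : S → S → ℝ, (∀ a b, 0 ≤ d a b) → (∀ a b, psi lam T lab d a b ≤ d a b) →
      r ≤ d s t) :
    r ≤ bdist lam T lab s t := by
  refine le_csInf ⟨1, fun _ _ => 1, fun _ _ => ⟨zero_le_one, le_rfl⟩,
    psi_const_one_le hlam hT, rfl⟩ ?_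
  rintro _ ⟨d, hd, hpsi, rfl⟩
  exact h d (fun a b => (hd a b).1) hpsi

end Bisimilarity

section DisjointUnion

variable {M N L : Type*} {τ : M → M → ℝ} {θ : N → N → ℝ}

lemma isDist_sumT [Fintype M] [Fintype N] (hτ : ∀ m, IsDist (τ m)) (hθ : ∀ n, IsDist (θ n))
    (s : M ⊕ N) : IsDist (sumT τ θ s) := by
  rcases s with m | n
  · refine ⟨fun s => ?_, ?_⟩
    · rcases s with u | v
      exacts [(hτ m).1 u, le_rfl]
    · simpa [Fintype.sum_sum_type, sumT] using (hτ m).2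
  · refine ⟨fun s => ?_, ?_⟩
    · rcases s with u | v
      exacts [le_rfl, (hθ n).1 v]
    · simpa [Fintype.sum_sum_type, sumT] using (hθ n).2

lemma sum_indicator_sumT_inl [Fintype M] [Fintype N] (ℓ : M → L) (α : N → L) (m : M) :
    ∑ s, {s | sumL ℓ α s ∉ Set.range α}.indicator (sumT τ θ (Sum.inl m)) s
      = ∑ u, {u | ℓ u ∉ Set.range α}.indicator (τ m) u := by
  have hinr : ∀ v,
      {s | sumL ℓ α s ∉ Set.range α}.indicator (sumT τ θ (Sum.inl m)) (Sum.inr v) = 0 :=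
    fun v => Set.indicator_apply_eq_zero.mpr fun _ => rfl
  simp only [Fintype.sum_sum_type, hinr, Finset.sum_const_zero, add_zero]
  rfl

lemma sumT_inr_apply_eq_zero (n : N) :
    ∀ s ∉ Set.range Sum.inr, sumT τ θ (Sum.inr n) s = 0 := by
  rintro (u | v) hs
  · rfl
  · exact absurd ⟨v, rfl⟩ hs

end DisjointUnion

theorem stmt9_general {M N L : Type*} [Fintype M] [Fintype N]
    (lam : ℝ) (hlam : 0 < lam ∧ lam ≤ 1)
    (τ : M → M → ℝ) (hτ : ∀ m, IsDist (τ m)) (ℓ : M → L)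
    (θ : N → N → ℝ) (hθ : ∀ n, IsDist (θ n)) (α : N → L)
    (m : M) (n : N) :
    lam * ∑ u : M, Set.indicator {u : M | ℓ u ∉ Set.range α} (τ m) u
      ≤ bdist lam (sumT τ θ) (sumL ℓ α) (Sum.inl m) (Sum.inr n) := by
  have hT := isDist_sumT hτ hθ
  refine le_bdist hlam.2 hT fun d hd hpsi => ?_
  by_cases hlab : sumL ℓ α (Sum.inl m) = sumL ℓ α (Sum.inr n)
  · have hcross : ∀ s ∈ {s | sumL ℓ α s ∉ Set.range α}, ∀ t ∈ Set.range Sum.inr,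
        1 ≤ d s t := by
      rintro s hs _ ⟨v, rfl⟩
      exact one_le_of_psi_le (hpsi s _) fun h => hs ⟨v, h.symm⟩
    calc lam * ∑ u : M, Set.indicator {u : M | ℓ u ∉ Set.range α} (τ m) u
        ≤ lam * kant d (sumT τ θ (Sum.inl m)) (sumT τ θ (Sum.inr n)) := by
          rw [← sum_indicator_sumT_inl]
          exact mul_le_mul_of_nonneg_left
            (sum_indicator_le_kant (hT _) (hT _) hd hcross (sumT_inr_apply_eq_zero n)) hlam.1.le
      _ ≤ d (Sum.inl m) (Sum.inr n) := by simpa [psi, hlab] using hpsi (Sum.inl m) (Sum.inr n)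
  · calc lam * ∑ u : M, Set.indicator {u : M | ℓ u ∉ Set.range α} (τ m) u
        ≤ 1 := mul_le_one₀ hlam.2 ((hτ m).sum_indicator_nonneg _) ((hτ m).sum_indicator_le_one _)
      _ ≤ d (Sum.inl m) (Sum.inr n) := one_le_of_psi_le (hpsi _ _) hlab

theorem stmt9 {M N L : Type*} [Fintype M] [Nonempty M] [Fintype N] [Nonempty N]
    (lam : ℝ) (hlam : 0 < lam ∧ lam ≤ 1)
    (τ : M → M → ℝ) (hτ : ∀ m, IsDist (τ m)) (ℓ : M → L)
    (θ : N → N → ℝ) (hθ : ∀ n, IsDist (θ n)) (α : N → L)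
    (m : M) (n : N) :
    lam * ∑ u : M, Set.indicator {u : M | ℓ u ∉ Set.range α} (τ m) u
      ≤ bdist lam (sumT τ θ) (sumL ℓ α) (Sum.inl m) (Sum.inr n) :=
  stmt9_general lam hlam τ hτ ℓ θ hθ α m n
end

section
/- Let C be a coupling structure for the disjoint union of Markov chains M and N, λ ∈ (0,1], and let β_λ^C be the least fixed point of B_λ^C(d)(m,n) = 1 if γ_λ^C(m,n)=0, 0 if ℓ(m)≠α(n), and (1−λ)+λ·∑_{u,v} d(u,v)·C(m,n)(u,v) otherwise. Then β_λ^C(m,n) = 1 − γ_λ^C(m,n) for all states m of M and n of N. -/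
open Finset

def IsCoupling2 {M N : Type*} [Fintype M] [Fintype N] (μ : M → ℝ) (ν : N → ℝ)
    (ω : M × N → ℝ) : Prop :=
  (∀ p, 0 ≤ ω p) ∧ (∀ x, ∑ y, ω (x, y) = μ x) ∧ (∀ y, ∑ x, ω (x, y) = ν y)

open Classical in
noncomputable def gammaMN {M N L : Type*} [Fintype M] [Fintype N] (lam : ℝ)
    (ℓ : M → L) (α : N → L) (C : M → N → (M × N → ℝ)) (d : M → N → ℝ) : M → N → ℝ :=
  fun m n => if ℓ m = α n then lam * ∑ p : M × N, d p.1 p.2 * C m n p else 1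

open Classical in
noncomputable def bOp {M N L : Type*} [Fintype M] [Fintype N] (lam : ℝ)
    (ℓ : M → L) (α : N → L) (C : M → N → (M × N → ℝ)) (g : M → N → ℝ)
    (d : M → N → ℝ) : M → N → ℝ :=
  fun m n =>
    if g m n = 0 then 1
    else if ℓ m = α n then (1 - lam) + lam * ∑ p : M × N, d p.1 p.2 * C m n p
    else 0

/-!
The defect `f := 1 - γ - β` is what the proof controls. Since `1 - γ` is a fixed point of `B`,
leastness of `β` gives `f ≥ 0`; subtracting the two fixed-point equations shows that `f` solves
the homogeneous part `gammaHom` of `Γ` (`0` on mismatched labels, `λ ∑ f · C(m,n)` otherwise),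
and `f` vanishes where `γ` does. On a finite state space some `ε > 0` has `ε f ≤ γ`, so `γ - ε f`
is again a `[0,1]`-valued fixed point of `Γ`, and leastness of `γ` forces `f = 0`.
-/

theorem IsCoupling2.sum_eq_one {M N : Type*} [Fintype M] [Fintype N] {μ : M → ℝ} {ν : N → ℝ}
    {ω : M × N → ℝ} (hω : IsCoupling2 μ ν ω) (hμ : IsDist μ) : ∑ p, ω p = 1 := by
  rw [Fintype.sum_prod_type, ← hμ.2]
  exact sum_congr rfl fun x _ => hω.2.1 x

theorem exists_pos_mul_le_of_eq_zero_imp {X : Type*} [Finite X] {f g : X → ℝ} (hg : 0 ≤ g)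
    (hfg : ∀ x, g x = 0 → f x = 0) : ∃ ε > 0, ∀ x, ε * f x ≤ g x := by
  have hsmall : ∀ x, ∀ᶠ ε in nhdsWithin (0 : ℝ) (Set.Ioi 0), ε * f x ≤ g x := by
    intro x
    rcases (hg x).lt_or_eq with hpos | hzero
    · have hlim : Filter.Tendsto (fun ε : ℝ => ε * f x) (nhdsWithin 0 (Set.Ioi 0)) (nhds 0) :=
        ((continuous_mul_const (f x)).tendsto' 0 0 (zero_mul _)).mono_left nhdsWithin_le_nhds
      exact (hlim.eventually_lt_const hpos).mono fun _ h => h.le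
    · exact Filter.Eventually.of_forall fun ε => by simp [hfg x hzero.symm, ← hzero]
  exact ((Filter.eventually_all.2 hsmall).and self_mem_nhdsWithin).exists.imp
    fun ε h => ⟨h.2, h.1⟩

theorem sum_mul_eq_zero_of_eq_zero_imp {X : Type*} [Fintype X] {f g w : X → ℝ} (hg : 0 ≤ g)
    (hw : 0 ≤ w) (hfg : ∀ x, g x = 0 → f x = 0) (h : ∑ x, g x * w x = 0) :
    ∑ x, f x * w x = 0 := by
  have hgw := (sum_eq_zero_iff_of_nonneg fun x _ => mul_nonneg (hg x) (hw x)).1 h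
  refine sum_eq_zero fun x hx => ?_
  rcases mul_eq_zero.1 (hgw x hx) with hgx | hwx
  · rw [hfg x hgx, zero_mul]
  · rw [hwx, mul_zero]

open Classical in
noncomputable def gammaHom {M N L : Type*} [Fintype M] [Fintype N] (lam : ℝ)
    (ℓ : M → L) (α : N → L) (C : M → N → (M × N → ℝ)) (d : M → N → ℝ) : M → N → ℝ :=
  fun m n => if ℓ m = α n then lam * ∑ p : M × N, d p.1 p.2 * C m n p else 0

section Operators

variable {M N L : Type*} [Fintype M] [Fintype N] {lam : ℝ} {ℓ : M → L} {α : N → L}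
  {C : M → N → (M × N → ℝ)} {g d : M → N → ℝ} {m : M} {n : N}

theorem gammaMN_of_ne (h : ℓ m ≠ α n) : gammaMN lam ℓ α C d m n = 1 := if_neg h

theorem gammaMN_of_eq (h : ℓ m = α n) :
    gammaMN lam ℓ α C d m n = lam * ∑ p : M × N, d p.1 p.2 * C m n p := if_pos h

theorem bOp_of_eq_zero (hg : g m n = 0) : bOp lam ℓ α C g d m n = 1 := if_pos hg

theorem bOp_of_ne_zero_of_eq (hg : g m n ≠ 0) (h : ℓ m = α n) :
    bOp lam ℓ α C g d m n = (1 - lam) + lam * ∑ p : M × N, d p.1 p.2 * C m n p := by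
  simp only [bOp, if_neg hg, if_pos h]

theorem bOp_of_ne_zero_of_ne (hg : g m n ≠ 0) (h : ℓ m ≠ α n) : bOp lam ℓ α C g d m n = 0 := by
  simp only [bOp, if_neg hg, if_neg h]

theorem gammaMN_sub_mul {f : M → N → ℝ} (hf : gammaHom lam ℓ α C f = f) (ε : ℝ) :
    gammaMN lam ℓ α C (fun m n => g m n - ε * f m n) =
      fun m n => gammaMN lam ℓ α C g m n - ε * f m n := by
  funext m n
  rw [← congrFun₂ hf m n]
  unfold gammaMN gammaHom
  split_ifs
  · simp only [sub_mul, sum_sub_distrib, mul_assoc, ← mul_sum]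
    ring
  · ring

theorem bOp_one_sub_eq (hCsum : ∀ m n, ∑ p, C m n p = 1) (hg : gammaMN lam ℓ α C g = g) :
    bOp lam ℓ α C g (fun m n => 1 - g m n) = fun m n => 1 - g m n := by
  funext m n
  by_cases hg0 : g m n = 0
  · rw [bOp_of_eq_zero hg0, hg0, sub_zero]
  by_cases hl : ℓ m = α n
  · rw [bOp_of_ne_zero_of_eq hg0 hl, ← congrFun₂ hg m n, gammaMN_of_eq hl]
    simp only [sub_mul, one_mul, sum_sub_distrib, hCsum]
    ring
  · rw [bOp_of_ne_zero_of_ne hg0 hl, ← congrFun₂ hg m n, gammaMN_of_ne hl, sub_self]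

theorem eq_zero_of_gammaHom_eq_self (hgb : ∀ m n, 0 ≤ g m n ∧ g m n ≤ 1)
    (hgfix : gammaMN lam ℓ α C g = g)
    (hgleast : ∀ g' : M → N → ℝ, (∀ m n, 0 ≤ g' m n ∧ g' m n ≤ 1) →
        gammaMN lam ℓ α C g' = g' → ∀ m n, g m n ≤ g' m n)
    {f : M → N → ℝ} (hf0 : ∀ m n, 0 ≤ f m n) (hf : gammaHom lam ℓ α C f = f)
    (hfg : ∀ m n, g m n = 0 → f m n = 0) (m : M) (n : N) : f m n = 0 := by
  obtain ⟨ε, hε, hεf⟩ := exists_pos_mul_le_of_eq_zero_imp (f := Function.uncurry f)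
    (fun p => (hgb p.1 p.2).1) fun p => hfg p.1 p.2
  have hfix : gammaMN lam ℓ α C (fun m n => g m n - ε * f m n) = fun m n => g m n - ε * f m n := by
    rw [gammaMN_sub_mul hf, hgfix]
  have hεf0 : ∀ m n, 0 ≤ ε * f m n := fun m n => mul_nonneg hε.le (hf0 m n)
  have hbounds : ∀ m n, 0 ≤ g m n - ε * f m n ∧ g m n - ε * f m n ≤ 1 := fun m n =>
    ⟨sub_nonneg.2 (hεf (m, n)), by linarith [(hgb m n).2, hεf0 m n]⟩
  have hle := hgleast _ hbounds hfix m n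
  exact (mul_eq_zero.1 (by linarith [hεf0 m n] : ε * f m n = 0)).resolve_left hε.ne'

theorem one_sub_sub_eq_zero_of_eq_zero {b : M → N → ℝ} (hbfix : bOp lam ℓ α C g b = b)
    (hg : g m n = 0) : 1 - g m n - b m n = 0 := by
  rw [← congrFun₂ hbfix m n, bOp_of_eq_zero hg, hg]
  ring

theorem gammaHom_one_sub_sub_eq {b : M → N → ℝ} (hlam : 0 < lam) (hC : ∀ m n p, 0 ≤ C m n p)
    (hCsum : ∀ m n, ∑ p, C m n p = 1) (hg0 : ∀ m n, 0 ≤ g m n)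
    (hgfix : gammaMN lam ℓ α C g = g) (hbfix : bOp lam ℓ α C g b = b) :
    gammaHom lam ℓ α C (fun m n => 1 - g m n - b m n) = fun m n => 1 - g m n - b m n := by
  funext m n
  by_cases hl : ℓ m = α n
  · have hgr : g m n = lam * ∑ p : M × N, g p.1 p.2 * C m n p :=
      (congrFun₂ hgfix m n).symm.trans (gammaMN_of_eq hl)
    rw [gammaHom, if_pos hl]
    by_cases hgz : g m n = 0
    · have hsum : ∑ p : M × N, g p.1 p.2 * C m n p = 0 := by
        simpa [hgz, hlam.ne'] using hgr
      have hfsum : ∑ p : M × N, (1 - g p.1 p.2 - b p.1 p.2) * C m n p = 0 :=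
        sum_mul_eq_zero_of_eq_zero_imp (g := Function.uncurry g) (fun p => hg0 p.1 p.2) (hC m n)
          (fun p => one_sub_sub_eq_zero_of_eq_zero (m := p.1) (n := p.2) hbfix) hsum
      rw [one_sub_sub_eq_zero_of_eq_zero hbfix hgz, hfsum, mul_zero]
    · have hbr : b m n = (1 - lam) + lam * ∑ p : M × N, b p.1 p.2 * C m n p :=
        (congrFun₂ hbfix m n).symm.trans (bOp_of_ne_zero_of_eq hgz hl)
      simp only [sub_mul, one_mul, sum_sub_distrib, hCsum]
      linear_combination hgr + hbr
  · have hg1 : g m n = 1 := (congrFun₂ hgfix m n).symm.trans (gammaMN_of_ne hl)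
    have hb0 : b m n = 0 :=
      (congrFun₂ hbfix m n).symm.trans (bOp_of_ne_zero_of_ne (by simp [hg1]) hl)
    rw [gammaHom, if_neg hl, hg1, hb0]
    ring

end Operators

theorem stmt13_general {M N L : Type*} [Fintype M] [Fintype N]
    (lam : ℝ) (hlam : 0 < lam ∧ lam ≤ 1)
    (τ : M → M → ℝ) (hτ : ∀ m, IsDist (τ m)) (ℓ : M → L)
    (θ : N → N → ℝ) (α : N → L)
    (C : M → N → (M × N → ℝ)) (hC : ∀ m n, IsCoupling2 (τ m) (θ n) (C m n))
    (g : M → N → ℝ)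
    (hgb : ∀ m n, 0 ≤ g m n ∧ g m n ≤ 1)
    (hgfix : gammaMN lam ℓ α C g = g)
    (hgleast : ∀ g' : M → N → ℝ, (∀ m n, 0 ≤ g' m n ∧ g' m n ≤ 1) →
        gammaMN lam ℓ α C g' = g' → ∀ m n, g m n ≤ g' m n)
    (b : M → N → ℝ)
    (hbfix : bOp lam ℓ α C g b = b)
    (hbleast : ∀ b' : M → N → ℝ, (∀ m n, 0 ≤ b' m n ∧ b' m n ≤ 1) →
        bOp lam ℓ α C g b' = b' → ∀ m n, b m n ≤ b' m n) :
    ∀ m n, b m n = 1 - g m n := by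
  have hCsum : ∀ m n, ∑ p, C m n p = 1 := fun m n => (hC m n).sum_eq_one (hτ m)
  have hb_le : ∀ m n, b m n ≤ 1 - g m n :=
    hbleast _ (fun m n => ⟨sub_nonneg.2 (hgb m n).2, sub_le_self _ (hgb m n).1⟩)
      (bOp_one_sub_eq hCsum hgfix)
  have hdefect : gammaHom lam ℓ α C (fun m n => 1 - g m n - b m n) =
      fun m n => 1 - g m n - b m n :=
    gammaHom_one_sub_sub_eq hlam.1 (fun m n => (hC m n).1) hCsum (fun m n => (hgb m n).1)
      hgfix hbfix
  intro m n
  have hzero := eq_zero_of_gammaHom_eq_self hgb hgfix hgleast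
    (fun m n => sub_nonneg.2 (hb_le m n)) hdefect
    (fun _ _ => one_sub_sub_eq_zero_of_eq_zero hbfix) m n
  linarith

theorem stmt13 {M N L : Type*} [Fintype M] [Nonempty M] [Fintype N] [Nonempty N]
    (lam : ℝ) (hlam : 0 < lam ∧ lam ≤ 1)
    (τ : M → M → ℝ) (hτ : ∀ m, IsDist (τ m)) (ℓ : M → L)
    (θ : N → N → ℝ) (hθ : ∀ n, IsDist (θ n)) (α : N → L)
    (C : M → N → (M × N → ℝ)) (hC : ∀ m n, IsCoupling2 (τ m) (θ n) (C m n))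
    (g : M → N → ℝ)
    (hgb : ∀ m n, 0 ≤ g m n ∧ g m n ≤ 1)
    (hgfix : gammaMN lam ℓ α C g = g)
    (hgleast : ∀ g' : M → N → ℝ, (∀ m n, 0 ≤ g' m n ∧ g' m n ≤ 1) →
        gammaMN lam ℓ α C g' = g' → ∀ m n, g m n ≤ g' m n)
    (b : M → N → ℝ)
    (hbb : ∀ m n, 0 ≤ b m n ∧ b m n ≤ 1)
    (hbfix : bOp lam ℓ α C g b = b)
    (hbleast : ∀ b' : M → N → ℝ, (∀ m n, 0 ≤ b' m n ∧ b' m n ≤ 1) →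
        bOp lam ℓ α C g b' = b' → ∀ m n, b m n ≤ b' m n) :
    ∀ m n, b m n = 1 - g m n :=
  stmt13_general lam hlam τ hτ ℓ θ α C hC g hgb hgfix hgleast b hbfix hbleast
end
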